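/- In the nested sequent calculus for GL, the identity rule on arbitrary formulas is admissible: for every unary context Γ{-} and every formula A, the sequent Γ{A⊥, A} is derivable. -/

import Mathlib

/-- Formulas of GL in negation normal form. -/
inductive Formula : Type where
  | pos : ℕ → Formula
  | neg : ℕ → Formula
  | and : Formula → Formula → Formula
  | or  : Formula → Formula → Formula
  | box : Formula → Formula
  | dia : Formula → Formula
deriving DecidableEq

/-- Negation `A⊥` of a formula, via De Morgan duality. -/
def Formula.negate : Formula → Formula
  | .pos a => .neg a
  | .neg a => .pos a
  | .and A B => .or A.negate B.negate
  | .or A B => .and A.negate B.negate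
  | .box A => .dia A.negate
  | .dia A => .box A.negate

/-- An element of a nested sequent: a formula or a nested (bracketed) sequent. -/
inductive SeqElem : Type where
  | fml : Formula → SeqElem
  | nest : List SeqElem → SeqElem

/-- A nested sequent. -/
abbrev Sequent := List SeqElem

/-- Unary contexts: a nested sequent with a single hole. -/
inductive Ctx : Type where
  | hole : Sequent → Ctx
  | nest : Sequent → Ctx → Ctx

/-- Fill the hole of a context with a sequent. -/
def Ctx.fill : Ctx → Sequent → Sequent
  | .hole Δ, Γ => Δ ++ Γ
  | .nest Δ c, Γ => .nest (c.fill Γ) :: Δ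

/-- Depth of a context: number of brackets surrounding the hole. -/
def Ctx.depth : Ctx → ℕ
  | .hole _ => 0
  | .nest _ c => c.depth + 1

/-- Equivalence of nested sequents up to (deep) exchange. -/
inductive SeqEquiv : Sequent → Sequent → Prop where
  | nil : SeqEquiv [] []
  | cons {e : SeqElem} {Γ Δ : Sequent} : SeqEquiv Γ Δ → SeqEquiv (e :: Γ) (e :: Δ)
  | consNest {Γ' Δ' Γ Δ : Sequent} :
      SeqEquiv Γ' Δ' → SeqEquiv Γ Δ → SeqEquiv (.nest Γ' :: Γ) (.nest Δ' :: Δ)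
  | swap (a b : SeqElem) (Γ : Sequent) : SeqEquiv (a :: b :: Γ) (b :: a :: Γ)
  | trans {Γ Δ Θ : Sequent} : SeqEquiv Γ Δ → SeqEquiv Δ Θ → SeqEquiv Γ Θ

/-- `DerivH n Γ`: `Γ` has a cut-free derivation of height at most `n`. -/
inductive DerivH : ℕ → Sequent → Prop where
  | id (n : ℕ) (c : Ctx) (a : ℕ) :
      DerivH n (c.fill [.fml (.pos a), .fml (.neg a)])
  | and {n : ℕ} {c : Ctx} {A B : Formula} :
      DerivH n (c.fill [.fml A]) → DerivH n (c.fill [.fml B]) →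
      DerivH (n + 1) (c.fill [.fml (.and A B)])
  | or {n : ℕ} {c : Ctx} {A B : Formula} :
      DerivH n (c.fill [.fml A, .fml B]) →
      DerivH (n + 1) (c.fill [.fml (.or A B)])
  | box {n : ℕ} {c : Ctx} {A : Formula} :
      DerivH n (c.fill [.nest [.fml (.dia A.negate), .fml A]]) →
      DerivH (n + 1) (c.fill [.fml (.box A)])
  | dia {n : ℕ} (c d : Ctx) {A : Formula} :
      0 < d.depth →
      DerivH n (c.fill (d.fill [.fml A] ++ [.fml (.dia A)])) →
      DerivH (n + 1) (c.fill (d.fill [] ++ [.fml (.dia A)]))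
  | exch {n : ℕ} {Γ Δ : Sequent} : SeqEquiv Γ Δ → DerivH n Γ → DerivH n Δ
  | up {n : ℕ} {Γ : Sequent} : DerivH n Γ → DerivH (n + 1) Γ

/-- Derivability where cut is permitted on formulas satisfying `P`. -/
inductive DerivWith (P : Formula → Prop) : Sequent → Prop where
  | id (c : Ctx) (a : ℕ) :
      DerivWith P (c.fill [.fml (.pos a), .fml (.neg a)])
  | and {c : Ctx} {A B : Formula} :
      DerivWith P (c.fill [.fml A]) → DerivWith P (c.fill [.fml B]) →
      DerivWith P (c.fill [.fml (.and A B)])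
  | or {c : Ctx} {A B : Formula} :
      DerivWith P (c.fill [.fml A, .fml B]) →
      DerivWith P (c.fill [.fml (.or A B)])
  | box {c : Ctx} {A : Formula} :
      DerivWith P (c.fill [.nest [.fml (.dia A.negate), .fml A]]) →
      DerivWith P (c.fill [.fml (.box A)])
  | dia (c d : Ctx) {A : Formula} :
      0 < d.depth →
      DerivWith P (c.fill (d.fill [.fml A] ++ [.fml (.dia A)])) →
      DerivWith P (c.fill (d.fill [] ++ [.fml (.dia A)]))
  | cut {c : Ctx} {A : Formula} : P A →
      DerivWith P (c.fill [.fml A]) → DerivWith P (c.fill [.fml A.negate]) →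
      DerivWith P (c.fill [])
  | exch {Γ Δ : Sequent} : SeqEquiv Γ Δ → DerivWith P Γ → DerivWith P Δ

/-- Cut-free derivability. -/
abbrev Deriv : Sequent → Prop := DerivWith (fun _ => False)

/-! Induction on `A`, generalised over the context and over the formulas beside the hole.
The propositional cases are the usual ones. For `□A` the box rule asks for
`Γ{[◇A⊥, A], ◇A⊥}`; one application of the ◇ rule moves `A⊥` into the new bracket, where
`Γ{[A⊥, ◇A⊥, A], ◇A⊥}` is an instance of the induction hypothesis. The case `◇A` is dual. -/

namespace SeqEquiv

lemma refl : ∀ Γ : Sequent, SeqEquiv Γ Γ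
  | [] => .nil
  | _ :: Γ => .cons (refl Γ)

lemma of_perm {Γ Δ : Sequent} (h : Γ.Perm Δ) : SeqEquiv Γ Δ := by
  induction h with
  | nil => exact .nil
  | cons _ _ ih => exact .cons ih
  | swap x y l => exact .swap y x l
  | trans _ _ ih₁ ih₂ => exact ih₁.trans ih₂

lemma append_left (Θ : Sequent) {Γ Δ : Sequent} (h : SeqEquiv Γ Δ) :
    SeqEquiv (Θ ++ Γ) (Θ ++ Δ) := by
  induction Θ with
  | nil => exact h
  | cons _ _ ih => exact .cons ih

lemma fill (c : Ctx) {Γ Δ : Sequent} (h : SeqEquiv Γ Δ) :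
    SeqEquiv (c.fill Γ) (c.fill Δ) := by
  induction c with
  | hole Θ => exact append_left Θ h
  | nest Θ c ih => exact .consNest ih (refl Θ)

end SeqEquiv

namespace Ctx

def extend : Ctx → Sequent → Ctx
  | .hole Θ, Γ => .hole (Θ ++ Γ)
  | .nest Θ c, Γ => .nest Θ (c.extend Γ)

lemma fill_extend (c : Ctx) (Γ Δ : Sequent) : (c.extend Γ).fill Δ = c.fill (Γ ++ Δ) := by
  induction c with
  | hole Θ => simp [extend, fill]
  | nest Θ c ih => simp [extend, fill, ih]

def bracket : Ctx → Sequent → Ctx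
  | .hole Θ, Γ => .nest (Θ ++ Γ) (.hole [])
  | .nest Θ c, Γ => .nest Θ (c.bracket Γ)

lemma fill_bracket (c : Ctx) (Γ Δ : Sequent) :
    SeqEquiv ((c.bracket Γ).fill Δ) (c.fill (.nest Δ :: Γ)) := by
  induction c with
  | hole Θ => simpa [bracket, fill] using SeqEquiv.of_perm List.perm_middle.symm
  | nest Θ c ih => exact .consNest ih (SeqEquiv.refl Θ)

end Ctx

lemma Formula.negate_negate (A : Formula) : A.negate.negate = A := by
  induction A <;> simp [Formula.negate, *]

namespace DerivWith

variable {P : Formula → Prop} (c : Ctx) {Γ Δ : Sequent}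

lemma congr (h : SeqEquiv Γ Δ) (d : DerivWith P (c.fill Γ)) : DerivWith P (c.fill Δ) :=
  .exch (h.fill c) d

lemma perm (h : Γ.Perm Δ) (d : DerivWith P (c.fill Γ)) : DerivWith P (c.fill Δ) :=
  congr c (.of_perm h) d

lemma swap {a b : SeqElem} (d : DerivWith P (c.fill (a :: b :: Γ))) :
    DerivWith P (c.fill (b :: a :: Γ)) :=
  perm c (.swap b a Γ) d

lemma swap_tail {x a b : SeqElem} (d : DerivWith P (c.fill (x :: a :: b :: Γ))) :
    DerivWith P (c.fill (x :: b :: a :: Γ)) :=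
  perm c ((List.Perm.swap b a Γ).cons x) d

lemma of_bracket (d : DerivWith P ((c.bracket Γ).fill Δ)) :
    DerivWith P (c.fill (.nest Δ :: Γ)) :=
  .exch (c.fill_bracket Γ Δ) d

lemma of_extend (d : DerivWith P ((c.extend Γ).fill Δ)) : DerivWith P (c.fill (Δ ++ Γ)) :=
  perm c List.perm_append_comm (c.fill_extend Γ Δ ▸ d)

lemma to_extend (d : DerivWith P (c.fill (Δ ++ Γ))) : DerivWith P ((c.extend Γ).fill Δ) :=
  c.fill_extend Γ Δ ▸ perm c List.perm_append_comm d

lemma id_cons (a : ℕ) : DerivWith P (c.fill (.fml (.pos a) :: .fml (.neg a) :: Γ)) :=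
  of_extend c (.id _ a)

lemma and_cons {A B : Formula} (dA : DerivWith P (c.fill (.fml A :: Γ)))
    (dB : DerivWith P (c.fill (.fml B :: Γ))) :
    DerivWith P (c.fill (.fml (.and A B) :: Γ)) :=
  of_extend c (.and (to_extend c dA) (to_extend c dB))

lemma or_cons {A B : Formula} (d : DerivWith P (c.fill (.fml A :: .fml B :: Γ))) :
    DerivWith P (c.fill (.fml (.or A B) :: Γ)) :=
  of_extend c (.or (to_extend c d))

lemma box_cons {A : Formula}
    (d : DerivWith P (c.fill (.nest [.fml (.dia A.negate), .fml A] :: Γ))) :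
    DerivWith P (c.fill (.fml (.box A) :: Γ)) :=
  of_extend c (.box (to_extend c d))

lemma dia_cons {A : Formula} {Θ : Sequent}
    (d : DerivWith P (c.fill (.nest (.fml A :: Θ) :: .fml (.dia A) :: Γ))) :
    DerivWith P (c.fill (.nest Θ :: .fml (.dia A) :: Γ)) := by
  have rotate : SeqEquiv (.nest (.fml A :: Θ) :: .fml (.dia A) :: Γ)
      (.nest (Θ ++ [.fml A]) :: .fml (.dia A) :: Γ) :=
    .consNest (.of_perm (List.perm_append_comm (l₁ := [SeqElem.fml A]))) (.refl _)
  have := DerivWith.dia (c.extend Γ) (.nest [] (.hole Θ)) Nat.one_pos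
    (to_extend c (congr c rotate d))
  simpa [Ctx.fill] using of_extend c this

theorem identity_cons (A : Formula) (c : Ctx) (Γ : Sequent) :
    DerivWith P (c.fill (.fml A.negate :: .fml A :: Γ)) := by
  induction A generalizing c Γ with
  | pos a => exact swap c (id_cons c a)
  | neg a => exact id_cons c a
  | and A B ihA ihB =>
    refine swap c (and_cons c (swap c (or_cons c ?_)) (swap c (or_cons c ?_)))
    · exact swap_tail c (ihA c _)
    · exact swap c (swap_tail c (ihB c _))
  | or A B ihA ihB =>
    refine and_cons c (swap c (or_cons c ?_)) (swap c (or_cons c ?_))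
    · exact swap_tail c (swap c (ihA c _))
    · exact swap_tail c (swap c (swap_tail c (ihB c _)))
  | box A ih =>
    exact swap c (box_cons c (dia_cons c (of_bracket c (swap_tail _ (ih _ _)))))
  | dia A ih =>
    refine box_cons c ?_
    rw [Formula.negate_negate]
    exact dia_cons c (of_bracket c (swap_tail _ (swap _ (ih _ _))))

end DerivWith

/-- the identity rule on arbitrary formulas is admissible. -/
theorem identity_admissible (c : Ctx) (A : Formula) :
    Deriv (c.fill [.fml A.negate, .fml A]) :=
  DerivWith.identity_cons A c []
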